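/- arXiv:0910.5037 — 2 statements merged into one kernel-verified Lean document; each statement's English description precedes it below -/
import Mathlib

section
/- Let P be a real 2n×2n matrix in the symplectic group Sp(2n, ℝ), i.e. Pᵀ J P = J where J = [[0, Iₙ], [−Iₙ, 0]] is the standard symplectic matrix, and suppose all complex eigenvalues of P are equal to 1 (equivalently, (P − I)^{2n} = 0). Then there exists a real 2n×2n matrix X such that Xᵀ J + J X = 0 (X lies in the symplectic Lie algebra sp(2n, ℝ)), X is nilpotent (all eigenvalues of X are 0), and exp(X) = P, where exp denotes the matrix exponential. In particular, every unipotent symplectic matrix lies in the image of the exponential map of the symplectic Lie algebra. -/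
/-!
Write `P = 1 + N` with `N` nilpotent. A logarithm `X` of `P` that is a polynomial in `N` without
constant term is obtained by Newton-type corrections modulo increasing powers of `N`; it is
nilpotent along with `N`. Since `exp` is injective on commuting nilpotent elements and both `Xᵀ`
and `-J X J⁻¹` are logarithms of `Pᵀ = J P⁻¹ J⁻¹` (polynomials in the commuting matrices
`Pᵀ - 1` and `J P J⁻¹ - 1`), we get `Xᵀ = -J X J⁻¹`.
-/

open Matrix Polynomial
open scoped Nat

namespace IsNilpotent

section Ring

variable {A : Type*} [Ring A] [Algebra ℚ A]

theorem exists_commute_exp_eq_one_add_add_sq_mul {z : A} (hz : IsNilpotent z) :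
    ∃ w, Commute z w ∧ exp z = 1 + z + z ^ 2 * w := by
  obtain ⟨k, hk⟩ := hz
  refine ⟨∑ i ∈ Finset.range k, ((i + 2)! : ℚ)⁻¹ • z ^ i,
    Commute.sum_right _ _ _ fun i _ => ((Commute.refl z).pow_right i).smul_right _, ?_⟩
  rw [exp_eq_sum (pow_eq_zero_of_le (Nat.le_add_right k 2) hk), Finset.sum_range_succ',
    Finset.sum_range_succ', Finset.mul_sum]
  simp only [mul_smul_comm, ← pow_add, add_comm 2, zero_add, Nat.factorial_one,
    Nat.factorial_zero, Nat.cast_one, inv_one, pow_one, pow_zero, one_smul]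
  abel

theorem eq_zero_of_exp_eq_one {z : A} (hz : IsNilpotent z) (h : exp z = 1) : z = 0 := by
  obtain ⟨w, hzw, hexp⟩ := exists_commute_exp_eq_one_add_add_sq_mul hz
  have hunit : IsUnit (1 + z * w) := (hzw.isNilpotent_mul_right hz).isUnit_one_add
  have hzero : z * (1 + z * w) = 0 := by
    rw [h] at hexp
    linear_combination (norm := noncomm_ring) -hexp
  exact hunit.mul_left_eq_zero.mp hzero

theorem eq_of_exp_eq_exp {a b : A} (hab : Commute a b) (ha : IsNilpotent a) (hb : IsNilpotent b)
    (h : exp a = exp b) : a = b := by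
  refine sub_eq_zero.mp (eq_zero_of_exp_eq_one (hab.isNilpotent_sub ha hb) ?_)
  rw [sub_eq_add_neg, exp_add_of_commute hab.neg_right ha hb.neg, h, exp_mul_exp_neg_self hb]

end Ring

section CommRing

variable {R : Type*} [CommRing R] [Algebra ℚ R]

/-- Newton-type correction: if `exp y = 1 + x + c` with `c ∈ (x)^(k+1)`, then
`exp (y - c) ≡ 1 + x` modulo `(x)^(k+2)`. -/
theorem exists_mem_span_exp_sub_mem_pow {x : R} (hx : IsNilpotent x) (k : ℕ) :
    ∃ y ∈ Ideal.span {x}, exp y - (1 + x) ∈ Ideal.span {x} ^ (k + 1) := by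
  set I := Ideal.span {x}
  have hnil : ∀ y ∈ I, IsNilpotent y := fun y hy => by
    obtain ⟨a, rfl⟩ := Ideal.mem_span_singleton'.mp hy
    exact (Commute.all a x).isNilpotent_mul_left hx
  induction k with
  | zero => exact ⟨0, I.zero_mem, by simpa using I.neg_mem (Ideal.mem_span_singleton_self x)⟩
  | succ k ih =>
    obtain ⟨y, hyI, hc⟩ := ih
    set c := exp y - (1 + x)
    have hcI : c ∈ I := Ideal.pow_le_self k.succ_ne_zero hc
    obtain ⟨w, -, hw⟩ := exists_commute_exp_eq_one_add_add_sq_mul (hnil c hcI).neg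
    refine ⟨y - c, I.sub_mem hyI hcI, ?_⟩
    have hc2 : c ^ 2 ∈ I ^ (k + 2) :=
      Ideal.pow_le_pow_right (by omega : k + 2 ≤ (k + 1) * 2)
        (by simpa [← pow_mul] using Ideal.pow_mem_pow hc 2)
    have hxc : x * c ∈ I ^ (k + 2) := by
      rw [pow_succ']
      exact Ideal.mul_mem_mul (Ideal.mem_span_singleton_self x) hc
    have hcorr : exp (y - c) - (1 + x) = c ^ 2 * ((1 + x + c) * w - 1) - x * c := by
      have hy : exp y = 1 + x + c := by simp [c]
      rw [sub_eq_add_neg y c, exp_add_of_commute (Commute.all _ _) (hnil y hyI) (hnil c hcI).neg,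
        hw]
      linear_combination (1 - c + c ^ 2 * w) * hy
    rw [hcorr]
    exact Ideal.sub_mem _ (Ideal.mul_mem_right _ _ hc2) hxc

theorem exists_mem_span_exp_eq_one_add {x : R} (hx : IsNilpotent x) :
    ∃ y ∈ Ideal.span {x}, exp y = 1 + x := by
  obtain ⟨d, hd⟩ := hx
  obtain ⟨y, hy, hexp⟩ := exists_mem_span_exp_sub_mem_pow ⟨d, hd⟩ d
  rw [Ideal.span_singleton_pow, _root_.pow_succ, hd, zero_mul, Ideal.mem_span_singleton,
    zero_dvd_iff, sub_eq_zero] at hexp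
  exact ⟨y, hy, hexp⟩

end CommRing

open scoped IsMulCommutative in
theorem exists_exp_aeval_mul_X_eq_one_add {A : Type*} [Ring A] [Algebra ℚ A] {a : A}
    (ha : IsNilpotent a) : ∃ p : ℚ[X], exp (aeval a (p * X)) = 1 + a := by
  set S := Algebra.adjoin ℚ {a}
  let a' : S := ⟨a, Algebra.self_mem_adjoin_singleton ℚ a⟩
  have ha' : IsNilpotent a' := (map_iff (f := S.val) Subtype.val_injective).mp ha
  obtain ⟨y, hy, hexp⟩ := exists_mem_span_exp_eq_one_add ha'
  obtain ⟨r, rfl⟩ := Ideal.mem_span_singleton'.mp hy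
  have hr : (r : A) ∈ Algebra.adjoin ℚ {a} := r.2
  rw [Algebra.adjoin_singleton_eq_range_aeval] at hr
  obtain ⟨p, hp : aeval a p = r⟩ := hr
  refine ⟨p, ?_⟩
  have hexpA := congrArg S.val hexp
  rw [map_exp ((Commute.all r a').isNilpotent_mul_left ha') S.val] at hexpA
  simp only [map_mul, map_add, map_one, Subalgebra.coe_val, a', ← hp] at hexpA
  rwa [map_mul, aeval_X]

end IsNilpotent

theorem NormedSpace.exp_eq_isNilpotent_exp {A : Type*} [Ring A] [TopologicalSpace A]
    [IsTopologicalRing A] [Algebra ℚ A] {x : A} (hx : IsNilpotent x) :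
    NormedSpace.exp x = IsNilpotent.exp x := by
  obtain ⟨k, hk⟩ := hx
  rw [NormedSpace.exp_eq_tsum_rat, IsNilpotent.exp_eq_sum hk]
  exact tsum_eq_sum fun i hi => by rw [pow_eq_zero_of_le (by simpa using hi) hk, smul_zero]

theorem Polynomial.aeval_mul_X_pow_eq_zero {R A : Type*} [CommSemiring R] [Semiring A]
    [Algebra R A] {a : A} {d : ℕ} (ha : a ^ d = 0) (p : R[X]) : aeval a (p * X) ^ d = 0 := by
  rw [← map_pow, mul_pow, map_mul, map_pow _ X, aeval_X, ha, mul_zero]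

theorem Commute.aeval {R A : Type*} [CommSemiring R] [Semiring A] [Algebra R A] {a b : A}
    (h : Commute a b) (p q : R[X]) : Commute (aeval a p) (aeval b q) := by
  refine Algebra.commute_of_mem_adjoin_of_forall_mem_commute (aeval_mem_adjoin_singleton R b) ?_
  rintro _ rfl
  exact (Algebra.commute_of_mem_adjoin_of_forall_mem_commute (aeval_mem_adjoin_singleton R a)
    (by rintro _ rfl; exact h.symm)).symm

theorem Matrix.transpose_aeval {m R K : Type*} [Fintype m] [DecidableEq m] [CommSemiring R]
    [CommSemiring K] [Algebra R K] (M : Matrix m m K) (p : R[X]) :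
    (aeval M p)ᵀ = aeval Mᵀ p := by
  apply MulOpposite.op_injective
  rw [← aeval_op_apply]
  exact (aeval_algHom_apply (transposeAlgEquiv m R K) M p).symm

section Matrix

variable {m K : Type*} [Fintype m] [DecidableEq m] [CommRing K]

theorem IsNilpotent.exp_transpose [Module ℚ K] {M : Matrix m m K} (hM : IsNilpotent M) :
    IsNilpotent.exp Mᵀ = (IsNilpotent.exp M)ᵀ := by
  obtain ⟨k, hk⟩ := hM
  rw [IsNilpotent.exp_eq_sum hk,
    IsNilpotent.exp_eq_sum (k := k) (by rw [← transpose_pow, hk, transpose_zero]), transpose_sum]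
  simp only [transpose_smul, transpose_pow]

open IsNilpotent in
theorem Matrix.transpose_mul_add_mul_eq_zero_of_exp_eq [Algebra ℚ K] {J : (Matrix m m K)ˣ}
    {P : Matrix m m K} (hP : Pᵀ * J * P = J) {p : ℚ[X]} (hX : IsNilpotent (aeval (P - 1) p))
    (hexp : exp (aeval (P - 1) p) = P) :
    (aeval (P - 1) p)ᵀ * J + J * aeval (P - 1) p = 0 := by
  set X := aeval (P - 1) p
  lift P to (Matrix m m K)ˣ using hexp ▸ IsNilpotent.isUnit_exp hX
  set g := ConjAct.toConjAct J
  have hPt : (P : Matrix m m K)ᵀ = g • ↑P⁻¹ := by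
    rw [ConjAct.units_smul_def, ConjAct.ofConjAct_toConjAct, ← hP]
    simp [mul_assoc]
  have hexp_neg : exp (-X) = ↑P⁻¹ :=
    (Units.inv_eq_of_mul_eq_one_right (hexp ▸ exp_mul_exp_neg_self hX)).symm
  have hXt : Xᵀ = g • aeval (↑P⁻¹ - 1 : Matrix m m K) p := by
    rw [transpose_aeval, transpose_sub, transpose_one, hPt, ← aeval_smul, smul_sub, smul_one]
  have hXt_eq : Xᵀ = g • -X := by
    refine eq_of_exp_eq_exp ?_ (isNilpotent_transpose_iff.mpr hX)
      (hX.neg.map (MulSemiringAction.toRingHom _ _ g)) ?_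
    · rw [hXt]
      exact ((((Units.commute_inv_coe P).sub_left (.one_left _)).sub_right (.one_right _)).aeval
        p p).neg_right.map (MulSemiringAction.toRingHom _ _ g)
    · rw [IsNilpotent.exp_transpose hX, exp_smul g hX.neg, hexp, hexp_neg, hPt]
  rw [hXt_eq, ConjAct.units_smul_def, ConjAct.ofConjAct_toConjAct]
  simp

end Matrix

/-- Every unipotent symplectic matrix `P` (all eigenvalues equal to `1`, i.e.
`(P - I)^(2n) = 0`, and `Pᵀ J P = J` with `J = [[0, Iₙ], [-Iₙ, 0]]`) is the exponential
of a nilpotent Hamiltonian matrix `X` (i.e. `Xᵀ J + J X = 0` and all eigenvalues of `X`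
are zero, i.e. `X^(2n) = 0`). -/
theorem unipotent_symplectic_mem_image_exp
    (n : ℕ) (P : Matrix (Fin n ⊕ Fin n) (Fin n ⊕ Fin n) ℝ)
    (hP : Pᵀ * (fromBlocks 0 1 (-1) 0) * P = fromBlocks 0 1 (-1) 0)
    (hunip : (P - 1) ^ (2 * n) = 0) :
    ∃ X : Matrix (Fin n ⊕ Fin n) (Fin n ⊕ Fin n) ℝ,
      Xᵀ * (fromBlocks 0 1 (-1) 0) + (fromBlocks 0 1 (-1) 0) * X = 0 ∧
      X ^ (2 * n) = 0 ∧
      NormedSpace.exp X = P := by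
  set J : Matrix (Fin n ⊕ Fin n) (Fin n ⊕ Fin n) ℝ := fromBlocks 0 1 (-1) 0
  have hJJ : J * J = -1 := by simp [J, fromBlocks_multiply, ← fromBlocks_one, fromBlocks_neg]
  obtain ⟨p, hexp⟩ := IsNilpotent.exists_exp_aeval_mul_X_eq_one_add ⟨_, hunip⟩
  rw [add_sub_cancel] at hexp
  have hXnil : aeval (P - 1) (p * X) ^ (2 * n) = 0 := aeval_mul_X_pow_eq_zero hunip p
  refine ⟨_, ?_, hXnil, (NormedSpace.exp_eq_isNilpotent_exp ⟨_, hXnil⟩).trans hexp⟩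
  exact transpose_mul_add_mul_eq_zero_of_exp_eq (J := ⟨J, -J, by simp [hJJ], by simp [hJJ]⟩)
    hP ⟨_, hXnil⟩ hexp
end

section
/- Let V be a finite-dimensional real vector space, let ω be a nondegenerate alternating bilinear form on V, and let P : V → V be a linear map satisfying ω(Pu, Pv) = ω(u, v) for all u, v ∈ V (a linear symplectomorphism; in particular P is bijective). Let E₀ = ker((P − id)^{dim V}) be the generalized eigenspace of P for the eigenvalue 1, and let E₁ = {v ∈ V : ω(v, e) = 0 for all e ∈ E₀} be the ω-orthogonal complement of E₀. Then V = E₀ ⊕ E₁ as a direct sum, the restrictions of ω to E₀ and to E₁ are both nondegenerate, and P maps each of E₀ and E₁ onto itself. -/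
open Module

/-!
Write `Q = P - 1`. Since `P` is an isometry, `ω (Q^k u) v = (-1)^k ω (P^k u) (Q^k v)`, so the range
of `Q^k` is `ω`-orthogonal to the kernel of `Q^k`, and by counting dimensions it is the whole
orthogonal complement. For `k` large, Fitting's lemma splits `V` as `ker Q^k ⊕ range Q^k`, and
once `k ≥ dim V` this is `E₀ ⊕ E₁`. A summand whose orthogonal is a complement carries a
nondegenerate restriction, and `P`, which commutes with `Q` and is injective, maps the kernel and
the range of `Q^k` onto themselves.
-/

theorem Commute.self_sub_one {R : Type*} [Ring R] (a : R) : Commute a (a - 1) :=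
  (Commute.refl a).sub_right (Commute.one_right a)

theorem Submodule.map_eq_of_injective_of_map_le {K V : Type*} [DivisionRing K]
    [AddCommGroup V] [Module K V] [FiniteDimensional K V] {f : End K V}
    (hf : Function.Injective f) {p : Submodule K V} (h : p.map f ≤ p) : p.map f = p :=
  eq_of_le_of_finrank_eq h (p.equivMapOfInjective f hf).finrank_eq.symm

namespace LinearMap

section Commute

variable {R M : Type*} [Semiring R] [AddCommMonoid M] [Module R M] {f g : End R M}

theorem map_ker_le_of_commute (h : Commute f g) : (ker g).map f ≤ ker g := by
  rintro _ ⟨x, hx, rfl⟩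
  rw [SetLike.mem_coe, mem_ker] at hx
  rw [mem_ker, ← Module.End.mul_apply, ← h.eq, Module.End.mul_apply, hx, map_zero]

theorem map_range_le_of_commute (h : Commute f g) : (range g).map f ≤ range g := by
  rintro _ ⟨_, ⟨x, rfl⟩, rfl⟩
  exact ⟨f x, by rw [← Module.End.mul_apply, ← h.eq, Module.End.mul_apply]⟩

end Commute

namespace IsOrthogonal

section CommRing

variable {R M : Type*} [CommRing R] [AddCommGroup M] [Module R M]
  {B : LinearMap.BilinForm R M} {P : End R M}

theorem injective (hB : B.Nondegenerate) (hP : B.IsOrthogonal P) : Function.Injective P := by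
  refine (injective_iff_map_eq_zero P).mpr fun x hx ↦ hB.1 x fun v ↦ ?_
  rw [← hP x v, hx, map_zero, zero_apply]

theorem apply_sub_one_left (hP : B.IsOrthogonal P) (u v : M) :
    B ((P - 1) u) v = -B (P u) ((P - 1) v) := by
  simp only [sub_apply, Module.End.one_apply, map_sub, hP u v]
  ring

theorem apply_sub_one_pow_left (hP : B.IsOrthogonal P) (k : ℕ) (u v : M) :
    B (((P - 1) ^ k) u) v = (-1) ^ k * B ((P ^ k) u) (((P - 1) ^ k) v) := by
  induction k generalizing u with
  | zero => simp
  | succ k ih =>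
    have hcomm : (P ^ k) ((P - 1) u) = (P - 1) ((P ^ k) u) := by
      rw [← Module.End.mul_apply, ← Module.End.mul_apply,
        ((Commute.self_sub_one P).pow_left k).eq]
    calc B (((P - 1) ^ (k + 1)) u) v = B (((P - 1) ^ k) ((P - 1) u)) v := by
          rw [pow_succ, Module.End.mul_apply]
      _ = (-1) ^ k * B ((P ^ k) ((P - 1) u)) (((P - 1) ^ k) v) := ih _
      _ = (-1) ^ k * -B (P ((P ^ k) u)) ((P - 1) (((P - 1) ^ k) v)) := by
          rw [hcomm, apply_sub_one_left hP]
      _ = (-1) ^ (k + 1) * B ((P ^ (k + 1)) u) (((P - 1) ^ (k + 1)) v) := by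
          simp only [pow_succ', Module.End.mul_apply]
          ring

theorem apply_sub_one_pow_eq_zero (hP : B.IsOrthogonal P) {k : ℕ} (u : M) {e : M}
    (he : e ∈ ker ((P - 1) ^ k)) : B (((P - 1) ^ k) u) e = 0 := by
  rw [apply_sub_one_pow_left hP, mem_ker.mp he, map_zero, mul_zero]

end CommRing

section Field

variable {K V : Type*} [Field K] [AddCommGroup V] [Module K V] [FiniteDimensional K V]
  {B : LinearMap.BilinForm K V} {P : End K V}

theorem range_sub_one_pow_eq_orthogonal_ker (hB : B.Nondegenerate) (hB₀ : B.IsRefl)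
    (hP : B.IsOrthogonal P) (k : ℕ) :
    range ((P - 1) ^ k) = B.orthogonal (ker ((P - 1) ^ k)) := by
  refine Submodule.eq_of_le_of_finrank_eq ?_ ?_
  · rintro _ ⟨u, rfl⟩ e he
    exact hB₀ _ _ (apply_sub_one_pow_eq_zero hP u he)
  · have := finrank_range_add_finrank_ker ((P - 1) ^ k)
    rw [BilinForm.finrank_orthogonal hB]
    omega

theorem isCompl_ker_sub_one_pow_finrank_orthogonal (hB : B.Nondegenerate) (hB₀ : B.IsRefl)
    (hP : B.IsOrthogonal P) :
    IsCompl (ker ((P - 1) ^ finrank K V)) (B.orthogonal (ker ((P - 1) ^ finrank K V))) := by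
  obtain ⟨m, hfit, hm⟩ := ((P - 1).eventually_isCompl_ker_pow_range_pow.and
    (Filter.eventually_ge_atTop (finrank K V))).exists
  rwa [range_sub_one_pow_eq_orthogonal_ker hB hB₀ hP,
    Module.End.ker_pow_eq_ker_pow_finrank_of_le hm] at hfit

end Field

end IsOrthogonal

end LinearMap

namespace LinearMap.BilinForm

variable {R M : Type*} [CommRing R] [AddCommGroup M] [Module R M] {B : LinearMap.BilinForm R M}

theorem eq_zero_of_forall_apply_eq_zero_of_disjoint_orthogonal (hB₀ : B.IsRefl)
    {W : Submodule R M} (hW : Disjoint W (B.orthogonal W)) {v : M} (hv : v ∈ W)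
    (h : ∀ w ∈ W, B v w = 0) : v = 0 :=
  (Submodule.disjoint_def.mp hW) v hv fun w hw ↦ hB₀ _ _ (h w hw)

end LinearMap.BilinForm

/-- For a linear symplectomorphism `P` of a symplectic vector space `(V, ω)`, the generalized
eigenspace `E₀` of `P` for the eigenvalue `1` and its `ω`-orthogonal complement `E₁` give a
symplectic direct sum decomposition `V = E₀ ⊕ E₁` (the restriction of `ω` to each summand is
nondegenerate), and `P` maps each of `E₀`, `E₁` onto itself. -/
theorem symplectic_splitting_generalized_eigenspace_one
    (V : Type*) [AddCommGroup V] [Module ℝ V] [FiniteDimensional ℝ V]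
    (ω : LinearMap.BilinForm ℝ V)
    (halt : ∀ v : V, ω v v = 0) (hnd : ω.Nondegenerate)
    (P : V →ₗ[ℝ] V) (hsymp : ∀ u v : V, ω (P u) (P v) = ω u v)
    (E₀ E₁ : Submodule ℝ V)
    (hE₀ : E₀ = LinearMap.ker ((P - LinearMap.id) ^ (finrank ℝ V)))
    (hE₁ : ∀ v : V, v ∈ E₁ ↔ ∀ e ∈ E₀, ω v e = 0) :
    IsCompl E₀ E₁ ∧
    (∀ v ∈ E₀, (∀ w ∈ E₀, ω v w = 0) → v = 0) ∧
    (∀ v ∈ E₁, (∀ w ∈ E₁, ω v w = 0) → v = 0) ∧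
    Submodule.map P E₀ = E₀ ∧ Submodule.map P E₁ = E₁ := by
  have hrefl : ω.IsRefl := LinearMap.BilinForm.IsAlt.isRefl halt
  have hP : ω.IsOrthogonal P := hsymp
  have hE₁_eq : E₁ = ω.orthogonal E₀ := by
    ext v
    exact (hE₁ v).trans ⟨fun h e he ↦ hrefl _ _ (h e he), fun h e he ↦ hrefl _ _ (h e he)⟩
  rw [← Module.End.one_eq_id] at hE₀
  have hcompl : IsCompl E₀ E₁ := by
    rw [hE₁_eq, hE₀]
    exact hP.isCompl_ker_sub_one_pow_finrank_orthogonal hnd hrefl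
  have hE₁_range : E₁ = LinearMap.range ((P - 1) ^ finrank ℝ V) := by
    rw [hE₁_eq, hE₀, hP.range_sub_one_pow_eq_orthogonal_ker hnd hrefl]
  have hdisj₁ : Disjoint E₁ (ω.orthogonal E₁) := by
    rw [hE₁_eq, LinearMap.BilinForm.orthogonal_orthogonal hnd hrefl, ← hE₁_eq]
    exact hcompl.symm.disjoint
  have hinj : Function.Injective P := hP.injective hnd
  have hcomm : Commute P ((P - 1) ^ finrank ℝ V) := (Commute.self_sub_one P).pow_right _
  refine ⟨hcompl,
    fun _ ↦ LinearMap.BilinForm.eq_zero_of_forall_apply_eq_zero_of_disjoint_orthogonal hrefl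
      (hE₁_eq ▸ hcompl.disjoint),
    fun _ ↦ LinearMap.BilinForm.eq_zero_of_forall_apply_eq_zero_of_disjoint_orthogonal hrefl hdisj₁,
    ?_, ?_⟩
  · rw [hE₀]
    exact Submodule.map_eq_of_injective_of_map_le hinj (LinearMap.map_ker_le_of_commute hcomm)
  · rw [hE₁_range]
    exact Submodule.map_eq_of_injective_of_map_le hinj (LinearMap.map_range_le_of_commute hcomm)
end
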